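/- Let X_1,…,X_n and Y_1,…,Y_n be independent symmetric random vectors with values in a real separable Banach space E such that X_i is (1,1)-dominated by Y_i for each i = 1,…,n, and let ‖·‖ be a continuous norm on E. Then E min{ E_ε (‖∑_{i=1}^n ε_i X_i‖ − 1)_+ , 1 } ≤ E min{ E_ε (‖∑_{i=1}^n ε_i Y_i‖ − 1)_+ , 1 }, where ε₁,…,ε_n are independent Rademacher signs (each uniform on {−1,1}) independent of the X_i and Y_i, E_ε denotes expectation over the signs only, and u_+ = max{u,0}. -/

import Mathlib

open MeasureTheory ProbabilityTheory
open scoped ENNReal BigOperators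

noncomputable section

/-- A continuous norm on a real normed space `E` (a norm possibly different from the
ambient one, required to be continuous with respect to the ambient topology). -/
def IsContNorm {E : Type*} [NormedAddCommGroup E] [NormedSpace ℝ E] (N : E → ℝ) : Prop :=
  Continuous N ∧ (∀ x y : E, N (x + y) ≤ N x + N y) ∧
    (∀ (c : ℝ) (x : E), N (c • x) = |c| * N x) ∧ ∀ x : E, N x = 0 → x = 0

/-- A random vector is symmetric if `X` and `-X` have the same distribution. -/
def IsSymmetricRV {Ω E : Type*} [MeasurableSpace Ω] [MeasurableSpace E] [Neg E]
    (μ : Measure Ω) (X : Ω → E) : Prop :=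
  Measure.map X μ = Measure.map (fun ω => -(X ω)) μ

/-- `X` is `(κ, λ)`-dominated by `Y`: for every continuous norm `N` on `E`,
`P(N(X) > 1) ≤ κ P(λ N(Y) > 1)`. -/
def Dominated {Ω E : Type*} [MeasurableSpace Ω] [NormedAddCommGroup E] [NormedSpace ℝ E]
    (μ : Measure Ω) (κ lam : ℝ) (X Y : Ω → E) : Prop :=
  ∀ N : E → ℝ, IsContNorm N →
    μ {ω | 1 < N (X ω)} ≤ ENNReal.ofReal κ * μ {ω | 1 < lam * N (Y ω)}

/-- The sign vector `(±1)ⁿ` encoded by a Boolean vector; a uniform random `s` gives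
independent Rademacher signs. -/
def signs {n : ℕ} (s : Fin n → Bool) (i : Fin n) : ℝ := if s i then 1 else -1

open Set
open scoped Pointwise

section Aux

variable {E : Type*} [NormedAddCommGroup E] [NormedSpace ℝ E]

lemma IsContNorm.nonneg {N : E → ℝ} (hN : IsContNorm N) (x : E) : 0 ≤ N x := by
  have h0 : N 0 = 0 := by
    have := hN.2.2.1 0 0; simpa using this
  have h1 := hN.2.1 x (-x)
  rw [add_neg_cancel, h0] at h1
  have hneg : N (-x) = N x := by
    have := hN.2.2.1 (-1) x; simpa using this
  linarith

lemma gauge_isContNorm {N : E → ℝ} (hN : IsContNorm N) {C : Set E}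
    (hconv : Convex ℝ C) (hclosed : IsClosed C) (hsymm : ∀ x ∈ C, -x ∈ C)
    (h0 : C ∈ nhds 0) {B : ℝ} (hB : ∀ x ∈ C, N x ≤ B) :
    IsContNorm (gauge C) ∧ ∀ x, (gauge C x ≤ 1 ↔ x ∈ C) := by
  have habs : Absorbent ℝ C := absorbent_nhds_zero h0
  have hstar : StarConvex ℝ 0 C := hconv.starConvex (mem_of_mem_nhds h0)
  have hbal : Balanced ℝ C := by
    intro a ha
    rintro x ⟨y, hy, rfl⟩
    rcases le_or_gt 0 a with h | h
    · exact hstar.smul_mem hy h (by rwa [Real.norm_eq_abs, abs_of_nonneg h] at ha)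
    · have : a • y = (-a) • (-y) := by simp
      show a • y ∈ C
      rw [this]
      exact hstar.smul_mem (hsymm y hy) (by linarith)
        (by rwa [Real.norm_eq_abs, abs_of_neg h] at ha)
  have hmem : ∀ x, gauge C x ≤ 1 ↔ x ∈ C := by
    intro x
    rw [gauge_le_one_iff_mem_closure hconv h0, hclosed.closure_eq]
  refine ⟨⟨continuous_gauge hconv h0, gauge_add_le hconv habs, ?_, ?_⟩, hmem⟩
  · intro c x
    simpa [Real.norm_eq_abs] using gauge_smul hbal c x
  · intro x hx
    by_contra hxne
    -- N x ≤ (max B 1) * r for any admissible r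
    set B' := max B 1 with hB'
    have hB'pos : 0 < B' := lt_of_lt_of_le one_pos (le_max_right _ _)
    have key : ∀ r ∈ {r ∈ Set.Ioi (0:ℝ) | x ∈ (r • C : Set E)}, N x / B' ≤ r := by
      rintro r ⟨hr, y, hy, rfl⟩
      have : N (r • y) = |r| * N y := hN.2.2.1 r y
      rw [this, abs_of_pos hr]
      rw [div_le_iff₀ hB'pos]
      have hNy : N y ≤ B' := le_trans (hB y hy) (le_max_left _ _)
      have := hN.nonneg y
      nlinarith [hr.out]
    have hne : {r ∈ Set.Ioi (0:ℝ) | x ∈ (r • C : Set E)}.Nonempty := by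
      rcases (habs x).exists_pos with ⟨r, hrpos, hr⟩
      refine ⟨max r 1, ⟨Set.mem_Ioi.mpr (lt_of_lt_of_le one_pos (le_max_right _ _)), ?_⟩⟩
      exact singleton_subset_iff.mp (hr (max r 1) (by rw [Real.norm_eq_abs, abs_of_pos (lt_of_lt_of_le hrpos (le_max_left _ _))]; exact le_max_left _ _))
    have : N x / B' ≤ gauge C x := by
      rw [gauge_def]
      exact le_csInf hne key
    rw [hx] at this
    have hNx : 0 < N x := by
      rcases lt_or_eq_of_le (hN.nonneg x) with h | h
      · exact h
      · exact absurd (hN.2.2.2 x h.symm) hxne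
    have : 0 < N x / B' := div_pos hNx hB'pos
    linarith [le_trans this.le (by rw [hx] at *; linarith : N x / B' ≤ 0)]

lemma core_compare [MeasurableSpace E] [BorelSpace E] {N : E → ℝ} (hN : IsContNorm N)
    {ν₁ ν₂ : Measure E} [IsProbabilityMeasure ν₁] [IsProbabilityMeasure ν₂]
    (hdom : ∀ M : E → ℝ, IsContNorm M → ν₁ {x | 1 < M x} ≤ ν₂ {x | 1 < M x})
    {g : E → ℝ} (hgc : Continuous g) (hgconv : ConvexOn ℝ Set.univ g)
    (hgsymm : ∀ x, g (-x) = g x) (hg0 : ∀ x, 0 ≤ g x)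
    (hgbdd : ∀ t : ℝ, t < 1 → ∃ B, ∀ x, g x ≤ t → N x ≤ B) :
    ∫⁻ x, ENNReal.ofReal (min (g x) 1) ∂ν₁ ≤ ∫⁻ x, ENNReal.ofReal (min (g x) 1) ∂ν₂ := by
  have hfnn : ∀ x, 0 ≤ min (g x) 1 := fun x => le_min (hg0 x) zero_le_one
  have hfm : AEMeasurable (fun x => min (g x) 1) (ν₁ : Measure E) :=
    ((hgc.min continuous_const).measurable).aemeasurable
  have hfm2 : AEMeasurable (fun x => min (g x) 1) (ν₂ : Measure E) :=
    ((hgc.min continuous_const).measurable).aemeasurable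
  rw [lintegral_eq_lintegral_meas_lt ν₁ (Filter.Eventually.of_forall hfnn) hfm,
    lintegral_eq_lintegral_meas_lt ν₂ (Filter.Eventually.of_forall hfnn) hfm2]
  set m := sInf (Set.range g) with hm
  have hrange : (Set.range g).Nonempty := ⟨g 0, 0, rfl⟩
  have hbdd : BddBelow (Set.range g) := ⟨0, by rintro y ⟨x, rfl⟩; exact hg0 x⟩
  have hmle : ∀ x, m ≤ g x := fun x => csInf_le hbdd ⟨x, rfl⟩
  apply lintegral_mono_ae
  have h1 : ∀ᵐ t ∂(volume.restrict (Set.Ioi (0:ℝ))), t ≠ m := by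
    have h0 : (volume : Measure ℝ) {t : ℝ | ¬ t ≠ m} = 0 := by
      have : {t : ℝ | ¬ t ≠ m} = {m} := by ext t; simp
      rw [this]
      exact Real.volume_singleton
    exact ae_mono Measure.restrict_le_self (ae_iff.mpr h0)
  have h2 : ∀ᵐ t ∂(volume.restrict (Set.Ioi (0:ℝ))), t ∈ Set.Ioi (0:ℝ) :=
    ae_restrict_mem measurableSet_Ioi
  filter_upwards [h1, h2] with t htm ht
  rcases le_or_gt 1 t with h1t | h1t
  · have hempty : {a : E | t < min (g a) 1} = ∅ := by
      ext a; simp only [Set.mem_setOf_eq, Set.mem_empty_iff_false, iff_false, not_lt]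
      exact le_trans (min_le_right _ _) h1t
    rw [hempty]
    simp
  · have hset : {a : E | t < min (g a) 1} = {a : E | t < g a} := by
      ext a
      simp only [Set.mem_setOf_eq]
      exact ⟨fun h => lt_of_lt_of_le h (min_le_left _ _), fun h => lt_min h h1t⟩
    rw [hset]
    rcases lt_trichotomy t m with hlt | heq | hgt
    · have huniv : {a : E | t < g a} = Set.univ := by
        ext a; simp only [Set.mem_setOf_eq, Set.mem_univ, iff_true]
        exact lt_of_lt_of_le hlt (hmle a)
      rw [huniv]
      simp
    · exact absurd heq htm
    · -- good case : m < t < 1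
      obtain ⟨y, ⟨x₀, rfl⟩, hx₀⟩ := exists_lt_of_csInf_lt hrange hgt
      set C := {x : E | g x ≤ t} with hC
      have hg0lt : g 0 < t := by
        have h := hgconv.2 (Set.mem_univ x₀) (Set.mem_univ (-x₀))
          (by norm_num : (0:ℝ) ≤ 1/2) (by norm_num : (0:ℝ) ≤ 1/2) (by norm_num)
        have heq0 : (1/2 : ℝ) • x₀ + (1/2 : ℝ) • (-x₀) = 0 := by
          rw [smul_neg]; abel
        rw [heq0] at h
        rw [hgsymm x₀] at h
        calc g 0 ≤ (1/2) * g x₀ + (1/2) * g x₀ := h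
          _ = g x₀ := by ring
          _ < t := hx₀
      have hconvC : Convex ℝ C := by
        have := hgconv.convex_le t
        simpa [Set.sep_univ] using this
      have hclosedC : IsClosed C := IsClosed.preimage hgc isClosed_Iic
      have hsymmC : ∀ x ∈ C, -x ∈ C := fun x hx => by
        simp only [hC, Set.mem_setOf_eq, hgsymm] at *; exact hx
      have hnhdsC : C ∈ nhds (0 : E) := by
        refine Filter.mem_of_superset (IsOpen.mem_nhds (isOpen_lt hgc continuous_const) hg0lt) ?_
        intro x hx
        have hx' : g x < t := hx
        exact hx'.le
      obtain ⟨B, hB⟩ := hgbdd t h1t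
      obtain ⟨hM, hmemC⟩ := gauge_isContNorm hN hconvC hclosedC hsymmC hnhdsC
        (B := B) (fun x hx => hB x hx)
      have hsets : {a : E | t < g a} = {a : E | 1 < gauge C a} := by
        ext a
        simp only [Set.mem_setOf_eq, ← not_le]
        rw [hmemC a]
        exact not_congr (Iff.symm (Set.mem_setOf_eq ▸ Iff.rfl))
      rw [hsets]
      exact hdom (gauge C) hM

lemma signs_abs {n : ℕ} (s : Fin n → Bool) (i : Fin n) : |signs s i| = 1 := by
  unfold signs; rcases s i with _|_ <;> simp

lemma sum_update {n : ℕ} (x : Fin n → E) (i : Fin n) (v : E) (s : Fin n → Bool) :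
    ∑ j, signs s j • Function.update x i v j
      = signs s i • v + ∑ j ∈ Finset.univ \ {i}, signs s j • x j := by
  have h : (fun j => signs s j • Function.update x i v j)
      = Function.update (fun j => signs s j • x j) i (signs s i • v) := by
    funext j
    rcases eq_or_ne j i with rfl | hji
    · simp
    · simp [Function.update_of_ne hji]
  rw [h]
  exact Finset.sum_update_of_mem (f := fun j => signs s j • x j) (b := signs s i • v)
    (Finset.mem_univ i)

lemma G_props {n : ℕ} {N : E → ℝ} (hN : IsContNorm N) (x : Fin n → E) (i : Fin n) :
    let g : E → ℝ := fun v =>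
      (∑ s : Fin n → Bool, max (N (∑ j, signs s j • Function.update x i v j) - 1) 0) / 2 ^ n
    Continuous g ∧ ConvexOn ℝ Set.univ g ∧ (∀ v, g (-v) = g v) ∧ (∀ v, 0 ≤ g v) ∧
      ∀ t : ℝ, t < 1 → ∃ B, ∀ v, g v ≤ t → N v ≤ B := by
  intro g
  have h2n : (0:ℝ) < 2 ^ n := by positivity
  have hterm_nn : ∀ (s : Fin n → Bool) (v : E),
      0 ≤ max (N (∑ j, signs s j • Function.update x i v j) - 1) 0 :=
    fun s v => le_max_right _ _
  refine ⟨?_, ?_, ?_, ?_, ?_⟩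
  · -- continuity
    apply Continuous.div_const
    apply continuous_finset_sum
    intro s _
    apply Continuous.max _ continuous_const
    apply Continuous.sub _ continuous_const
    apply hN.1.comp
    apply continuous_finset_sum
    intro j _
    rcases eq_or_ne j i with rfl | hji
    · simpa using (continuous_const_smul (signs s j) : Continuous fun a : E => signs s j • a)
    · simp only [Function.update_of_ne hji]
      exact continuous_const
  · -- convexity
    refine ⟨convex_univ, ?_⟩
    intro u _ v _ a b ha hb hab
    have key : (∑ s : Fin n → Bool, max (N (∑ j, signs s j • Function.update x i (a • u + b • v) j) - 1) 0)
        ≤ a * (∑ s : Fin n → Bool, max (N (∑ j, signs s j • Function.update x i u j) - 1) 0)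
          + b * (∑ s : Fin n → Bool, max (N (∑ j, signs s j • Function.update x i v j) - 1) 0) := by
      rw [Finset.mul_sum, Finset.mul_sum, ← Finset.sum_add_distrib]
      apply Finset.sum_le_sum
      intro s _
      simp only [sum_update]
      set c := ∑ j ∈ Finset.univ \ {i}, signs s j • x j with hc
      set P := N (signs s i • u + c) with hP
      set Q := N (signs s i • v + c) with hQ
      have hA : N (signs s i • (a • u + b • v) + c) ≤ a * P + b * Q := by
        have halg : signs s i • (a • u + b • v) + c
            = a • (signs s i • u + c) + b • (signs s i • v + c) := by
          have hc2 : c = (a + b) • c := by rw [hab, one_smul]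
          nth_rewrite 1 [hc2]
          module
        rw [halg]
        calc N (a • (signs s i • u + c) + b • (signs s i • v + c))
            ≤ N (a • (signs s i • u + c)) + N (b • (signs s i • v + c)) := hN.2.1 _ _
          _ = a * P + b * Q := by
              rw [hN.2.2.1, hN.2.2.1, abs_of_nonneg ha, abs_of_nonneg hb]
      have h1 : P - 1 ≤ max (P - 1) 0 := le_max_left _ _
      have h2 : Q - 1 ≤ max (Q - 1) 0 := le_max_left _ _
      have h3 : (0:ℝ) ≤ max (P - 1) 0 := le_max_right _ _
      have h4 : (0:ℝ) ≤ max (Q - 1) 0 := le_max_right _ _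
      apply max_le
      · nlinarith
      · nlinarith
    show _ / _ ≤ a • (_ / _) + b • (_ / _)
    rw [smul_eq_mul, smul_eq_mul,
      show a * ((∑ s : Fin n → Bool, max (N (∑ j, signs s j • Function.update x i u j) - 1) 0) / 2 ^ n)
          + b * ((∑ s : Fin n → Bool, max (N (∑ j, signs s j • Function.update x i v j) - 1) 0) / 2 ^ n)
        = (a * (∑ s : Fin n → Bool, max (N (∑ j, signs s j • Function.update x i u j) - 1) 0)
          + b * (∑ s : Fin n → Bool, max (N (∑ j, signs s j • Function.update x i v j) - 1) 0)) / 2 ^ n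
        from by ring]
    gcongr
  · -- symmetry
    intro v
    have hsum : (∑ s : Fin n → Bool, max (N (∑ j, signs s j • Function.update x i (-v) j) - 1) 0)
        = ∑ s : Fin n → Bool, max (N (∑ j, signs s j • Function.update x i v j) - 1) 0 := by
      apply Fintype.sum_bijective (fun s : Fin n → Bool => Function.update s i (! s i))
        (Function.Involutive.bijective (fun s => by
          funext j
          rcases eq_or_ne j i with rfl | hji
          · simp
          · simp [Function.update_of_ne hji]))
      intro s
      have h1 : signs (Function.update s i (! s i)) i = - signs s i := by
        unfold signs; rcases s i with _|_ <;> simp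
      have h2 : ∀ j ∈ Finset.univ \ {i}, signs (Function.update s i (! s i)) j • x j
          = signs s j • x j := by
        intro j hj
        have hji : j ≠ i := by simpa using (Finset.mem_sdiff.mp hj).2
        unfold signs
        rw [Function.update_of_ne hji]
      have harg : ∑ j, signs s j • Function.update x i (-v) j
          = ∑ j, signs (Function.update s i (! s i)) j • Function.update x i v j := by
        rw [sum_update, sum_update, h1, Finset.sum_congr rfl h2]
        simp
      rw [harg]
    show (∑ s : Fin n → Bool, max (N (∑ j, signs s j • Function.update x i (-v) j) - 1) 0) / 2 ^ n
        = (∑ s : Fin n → Bool, max (N (∑ j, signs s j • Function.update x i v j) - 1) 0) / 2 ^ n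
    rw [hsum]
  · -- nonneg
    intro v
    apply div_nonneg _ h2n.le
    exact Finset.sum_nonneg fun s _ => hterm_nn s v
  · -- boundedness of sublevels
    intro t ht
    set s₀ : Fin n → Bool := fun _ => true with hs₀
    set c := ∑ j ∈ Finset.univ \ {i}, signs s₀ j • x j with hc
    refine ⟨1 + t * 2 ^ n + N c, ?_⟩
    intro v hv
    have hsum : (∑ s : Fin n → Bool, max (N (∑ j, signs s j • Function.update x i v j) - 1) 0)
        ≤ t * 2 ^ n := by
      rw [div_le_iff₀ h2n] at hv
      exact hv
    have hterm : max (N (∑ j, signs s₀ j • Function.update x i v j) - 1) 0 ≤ t * 2 ^ n :=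
      le_trans (Finset.single_le_sum (fun s _ => hterm_nn s v) (Finset.mem_univ s₀)) hsum
    rw [sum_update] at hterm
    have hsi : signs s₀ i • v = v := by unfold s₀; unfold signs; simp
    rw [hsi] at hterm
    have hNvc : N (v + c) ≤ 1 + t * 2 ^ n := by
      have := le_trans (le_max_left (N (v + c) - 1) 0) hterm
      linarith
    have hNneg : N (-c) = N c := by
      have := hN.2.2.1 (-1) c; simpa using this
    calc N v = N (v + c + -c) := by rw [add_assoc, add_neg_cancel, add_zero]
      _ ≤ N (v + c) + N (-c) := hN.2.1 _ _
      _ ≤ 1 + t * 2 ^ n + N c := by rw [hNneg]; linarith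

lemma map_eq_pi {Ω : Type*} [MeasurableSpace Ω] [MeasurableSpace E]
    (μ : Measure Ω) [IsProbabilityMeasure μ] {n : ℕ} (X : Fin n → Ω → E)
    (hmeas : ∀ i, Measurable (X i))
    (hindep : iIndepFun X μ) :
    Measure.map (fun ω i => X i ω) μ = Measure.pi (fun i => Measure.map (X i) μ) := by
  haveI : ∀ i, IsProbabilityMeasure (Measure.map (X i) μ) :=
    fun i => Measure.isProbabilityMeasure_map (hmeas i).aemeasurable
  haveI : ∀ i, SigmaFinite (Measure.map (X i) μ) := fun i => by
    haveI := this i; infer_instance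
  refine (Measure.pi_eq (μ := fun i => Measure.map (X i) μ) fun s hs => ?_).symm
  rw [Measure.map_apply (measurable_pi_lambda _ hmeas) (MeasurableSet.univ_pi hs)]
  have hpre : (fun ω i => X i ω) ⁻¹' (Set.univ.pi s) = ⋂ i ∈ Finset.univ, X i ⁻¹' s i := by
    ext ω; simp [Set.mem_pi]
  rw [hpre, hindep.measure_inter_preimage_eq_mul Finset.univ (fun i _ => hs i)]
  exact Finset.prod_congr rfl fun i _ => (Measure.map_apply (hmeas i) (hs i)).symm

lemma lmarginal_measure_congr {δ : Type*} [DecidableEq δ] {π : δ → Type*}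
    [∀ i, MeasurableSpace (π i)] (μ μ' : ∀ i, Measure (π i)) {s : Finset δ}
    (h : ∀ j ∈ s, μ j = μ' j) (f : (∀ i, π i) → ℝ≥0∞) :
    lmarginal μ s f = lmarginal μ' s f := by
  have he : (fun i : s => μ i) = fun i : s => μ' i := funext fun j => h j j.2
  unfold lmarginal
  rw [he]

lemma pi_lintegral_compare [MeasurableSpace E] [BorelSpace E]
    [SecondCountableTopology E]
    {N : E → ℝ} (hN : IsContNorm N) {n : ℕ}
    (νX νY : Fin n → Measure E) [hPX : ∀ i, IsProbabilityMeasure (νX i)]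
    [hPY : ∀ i, IsProbabilityMeasure (νY i)]
    (hdom : ∀ (i : Fin n) (M : E → ℝ), IsContNorm M →
      νX i {x | 1 < M x} ≤ νY i {x | 1 < M x}) :
    ∫⁻ z, ENNReal.ofReal
        (min ((∑ s : Fin n → Bool, max (N (∑ i, signs s i • z i) - 1) 0) / 2 ^ n) 1)
      ∂(Measure.pi νX)
    ≤ ∫⁻ z, ENNReal.ofReal
        (min ((∑ s : Fin n → Bool, max (N (∑ i, signs s i • z i) - 1) 0) / 2 ^ n) 1)
      ∂(Measure.pi νY) := by
  set f : (Fin n → E) → ℝ≥0∞ := fun z => ENNReal.ofReal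
      (min ((∑ s : Fin n → Bool, max (N (∑ i, signs s i • z i) - 1) 0) / 2 ^ n) 1) with hf
  have hGcont : Continuous fun z : Fin n → E =>
      (∑ s : Fin n → Bool, max (N (∑ i, signs s i • z i) - 1) 0) / 2 ^ n := by
    apply Continuous.div_const
    apply continuous_finset_sum
    intro s _
    exact ((hN.1.comp (continuous_finset_sum _ fun j _ =>
      (continuous_apply j).const_smul (signs s j))).sub continuous_const).max continuous_const
  have hfm : Measurable f :=
    ENNReal.measurable_ofReal.comp (hGcont.min continuous_const).measurable
  -- hybrid family
  set ν : ℕ → Fin n → Measure E := fun k i => if (i : ℕ) < k then νY i else νX i with hν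
  have hprob : ∀ k i, IsProbabilityMeasure (ν k i) := by
    intro k i
    simp only [hν]
    split
    · exact hPY i
    · exact hPX i
  have hstep : ∀ k, ∫⁻ z, f z ∂(Measure.pi (ν k)) ≤ ∫⁻ z, f z ∂(Measure.pi (ν (k+1))) := by
    intro k
    haveI := hprob k
    haveI := hprob (k+1)
    haveI : ∀ i, SigmaFinite (ν k i) := fun i => by haveI := hprob k i; infer_instance
    haveI : ∀ i, SigmaFinite (ν (k+1) i) := fun i => by haveI := hprob (k+1) i; infer_instance
    rcases le_or_gt n k with hk | hk
    · have : ν k = ν (k+1) := by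
        funext i
        simp only [hν]
        have h1 : (i : ℕ) < k := lt_of_lt_of_le i.2 hk
        rw [if_pos h1, if_pos (Nat.lt_succ_of_lt h1)]
      rw [this]
    · set i₀ : Fin n := ⟨k, hk⟩ with hi₀
      have hν_eq : ∀ j ∈ Finset.univ.erase i₀, ν k j = ν (k+1) j := by
        intro j hj
        have hji : j ≠ i₀ := Finset.ne_of_mem_erase hj
        have hjk : (j : ℕ) ≠ k := fun h => hji (Fin.ext h)
        simp only [hν]
        rcases Nat.lt_or_ge (j : ℕ) k with h | h
        · rw [if_pos h, if_pos (Nat.lt_succ_of_lt h)]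
        · have h1 : ¬ (j : ℕ) < k := not_lt.mpr h
          have h2 : ¬ (j : ℕ) < k + 1 := by
            rw [Nat.lt_succ_iff]
            exact fun hle => hjk (le_antisymm hle h)
          rw [if_neg h1, if_neg h2]
      have hki₀ : ν k i₀ = νX i₀ := by simp [hν, hi₀]
      have hk1i₀ : ν (k+1) i₀ = νY i₀ := by simp [hν, hi₀]
      have hpoint : ∀ x : Fin n → E,
          ∫⁻ v, f (Function.update x i₀ v) ∂(νX i₀) ≤ ∫⁻ v, f (Function.update x i₀ v) ∂(νY i₀) := by
        intro x
        obtain ⟨hc, hconv, hsym, hnn, hbd⟩ := G_props hN x i₀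
        exact core_compare hN (hdom i₀) hc hconv hsym hnn hbd
      rw [lintegral_eq_lmarginal_univ (μ := ν k) (fun _ => (0:E)),
        lintegral_eq_lmarginal_univ (μ := ν (k+1)) (fun _ => (0:E)),
        lmarginal_erase' (μ := ν k) f hfm (Finset.mem_univ i₀),
        lmarginal_erase' (μ := ν (k+1)) f hfm (Finset.mem_univ i₀)]
      rw [lmarginal_measure_congr (ν k) (ν (k+1)) hν_eq]
      apply lmarginal_mono
      intro x
      simp only [hki₀, hk1i₀]
      exact hpoint x
  have hmono : ∀ k, ∫⁻ z, f z ∂(Measure.pi (ν 0)) ≤ ∫⁻ z, f z ∂(Measure.pi (ν k)) := by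
    intro k
    induction k with
    | zero => exact le_rfl
    | succ k ih => exact le_trans ih (hstep k)
  have h0 : ν 0 = νX := by funext i; simp [hν]
  have hn : ν n = νY := by funext i; simp [hν, i.2]
  have := hmono n
  rw [h0, hn] at this
  exact this

end Aux

/-- **Corollary (comparison of the proxy).** If `Xᵢ ≺_(1,1) Yᵢ` for independent symmetric
random vectors and `N` is a continuous norm, then
`E min{E_ε (N(∑ εᵢXᵢ) − 1)₊, 1} ≤ E min{E_ε (N(∑ εᵢYᵢ) − 1)₊, 1}`; the expectation over
independent uniform signs is the average over all `2ⁿ` sign patterns, and the outer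
expectation is a Lebesgue integral. -/
theorem proxy_comparison
    {Ω E : Type*} [MeasurableSpace Ω] [NormedAddCommGroup E] [NormedSpace ℝ E]
    [CompleteSpace E] [TopologicalSpace.SeparableSpace E] [MeasurableSpace E] [BorelSpace E]
    (μ : Measure Ω) [IsProbabilityMeasure μ] (n : ℕ)
    (X Y : Fin n → Ω → E)
    (hXmeas : ∀ i, Measurable (X i)) (hYmeas : ∀ i, Measurable (Y i))
    (hXindep : iIndepFun X μ)
    (hYindep : iIndepFun Y μ)
    (hXsymm : ∀ i, IsSymmetricRV μ (X i)) (hYsymm : ∀ i, IsSymmetricRV μ (Y i))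
    (hdom : ∀ i, Dominated μ 1 1 (X i) (Y i))
    (N : E → ℝ) (hN : IsContNorm N) :
    ∫⁻ ω, ENNReal.ofReal
        (min ((∑ s : Fin n → Bool, max (N (∑ i, signs s i • X i ω) - 1) 0) / 2 ^ n) 1) ∂μ
      ≤ ∫⁻ ω, ENNReal.ofReal
        (min ((∑ s : Fin n → Bool, max (N (∑ i, signs s i • Y i ω) - 1) 0) / 2 ^ n) 1) ∂μ := by
  haveI : SecondCountableTopology E := inferInstance
  set νX : Fin n → Measure E := fun i => Measure.map (X i) μ with hνX
  set νY : Fin n → Measure E := fun i => Measure.map (Y i) μ with hνY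
  haveI : ∀ i, IsProbabilityMeasure (νX i) :=
    fun i => Measure.isProbabilityMeasure_map (hXmeas i).aemeasurable
  haveI : ∀ i, IsProbabilityMeasure (νY i) :=
    fun i => Measure.isProbabilityMeasure_map (hYmeas i).aemeasurable
  have hdom' : ∀ (i : Fin n) (M : E → ℝ), IsContNorm M →
      νX i {x | 1 < M x} ≤ νY i {x | 1 < M x} := by
    intro i M hM
    have hMset : MeasurableSet {x : E | 1 < M x} :=
      measurableSet_lt measurable_const hM.1.measurable
    rw [hνX, hνY, Measure.map_apply (hXmeas i) hMset, Measure.map_apply (hYmeas i) hMset]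
    have h := hdom i M hM
    simpa using h
  have hGcont : Continuous fun z : Fin n → E =>
      (∑ s : Fin n → Bool, max (N (∑ i, signs s i • z i) - 1) 0) / 2 ^ n := by
    apply Continuous.div_const
    apply continuous_finset_sum
    intro s _
    exact ((hN.1.comp (continuous_finset_sum _ fun j _ =>
      (continuous_apply j).const_smul (signs s j))).sub continuous_const).max continuous_const
  have hfm : Measurable (fun z : Fin n → E => ENNReal.ofReal
      (min ((∑ s : Fin n → Bool, max (N (∑ i, signs s i • z i) - 1) 0) / 2 ^ n) 1)) :=
    ENNReal.measurable_ofReal.comp (hGcont.min continuous_const).measurable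
  have hmapX : Measure.map (fun ω i => X i ω) μ = Measure.pi νX :=
    map_eq_pi μ X hXmeas hXindep
  have hmapY : Measure.map (fun ω i => Y i ω) μ = Measure.pi νY :=
    map_eq_pi μ Y hYmeas hYindep
  have key := pi_lintegral_compare hN νX νY hdom'
  rw [← hmapX, ← hmapY,
    lintegral_map hfm (measurable_pi_lambda _ hXmeas),
    lintegral_map hfm (measurable_pi_lambda _ hYmeas)] at key
  exact key
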